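/- arXiv:1603.00284 — 3 statements merged into one kernel-verified Lean document; each statement's English description precedes it below -/
import Mathlib

section
/- Let f be proper convex lsc on ℝ^n with minimizer x⋆. Suppose (μ_k) is a sequence with 0 < μ_k and limsup μ_k < ∞, and (ε_k) satisfies Σ ε_k < ∞. Define the inexact proximal point iteration: ỹ_{k+1} = argmin_x f(x) + (μ_k/2)‖x−y_k‖², and y_{k+1} any point with ‖y_{k+1} − ỹ_{k+1}‖ ≤ ε_k. Then (y_k) converges to a minimizer of f. -/
/-!
An exact proximal step `t` of `y` satisfies the subgradient inequality
`f t + μ ⟪y - t, x - t⟫ ≤ f x`, so it is firmly nonexpansive towards every minimizer `z`: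
`‖t - z‖² + ‖t - y‖² ≤ ‖y - z‖²`. With summable errors, `‖y k - z‖` therefore converges for every
minimizer `z`, the steps `‖ỹ k - y k‖` tend to `0`, and, `μ k` being bounded, `f (ỹ k) → min f`.
A cluster point of the bounded sequence `y` is then a minimizer by lower semicontinuity; the
distance to it converges and tends to `0` along a subsequence, so the whole sequence converges
to it.
-/

open Filter Topology Set

theorem le_of_forall_mem_Ioc_le_add_mul {a b d : ℝ} (h : ∀ s ∈ Ioc (0 : ℝ) 1, a ≤ b + s * d) :
    a ≤ b := by
  have hlim : Tendsto (fun s => b + s * d) (𝓝[>] 0) (𝓝 b) :=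
    ((by fun_prop : Continuous fun s : ℝ => b + s * d).tendsto' 0 b (by simp)).mono_left
      nhdsWithin_le_nhds
  exact ge_of_tendsto hlim (eventually_of_mem (Ioc_mem_nhdsGT one_pos) h)

theorem exists_tendsto_of_le_add_of_summable {a ε : ℕ → ℝ} (ha : ∀ k, 0 ≤ a k)
    (hε : Summable ε) (hrec : ∀ k, a (k + 1) ≤ a k + ε k) :
    ∃ L, Tendsto a atTop (𝓝 L) := by
  -- `a k + ∑_{i ≥ k} ε i` is antitone and bounded below, and the tails tend to `0`.
  set tail : ℕ → ℝ := fun k => ∑' i, ε (i + k)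
  have htail : Tendsto tail atTop (𝓝 0) := tendsto_sum_nat_add ε
  have hanti : Antitone (a + tail) := by
    refine antitone_nat_of_succ_le fun k => ?_
    have : tail k = ε k + tail (k + 1) := by
      simpa [tail, add_assoc, add_comm 1 k] using ((summable_nat_add_iff k).2 hε).tsum_eq_zero_add
    simp only [Pi.add_apply]
    linarith [hrec k]
  obtain ⟨c, hc⟩ := htail.bddBelow_range
  have hbdd : BddBelow (range (a + tail)) :=
    ⟨c, by rintro _ ⟨k, rfl⟩; exact le_add_of_nonneg_of_le (ha k) (hc ⟨k, rfl⟩)⟩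
  exact ⟨_, by simpa using (tendsto_atTop_ciInf hanti hbdd).sub htail⟩

theorem tendsto_of_tendsto_dist_of_subseq {X : Type*} [PseudoMetricSpace X] {u : ℕ → X}
    {z : X} {L : ℝ} (hL : Tendsto (fun k => dist (u k) z) atTop (𝓝 L)) {φ : ℕ → ℕ}
    (hφ : StrictMono φ) (hz : Tendsto (u ∘ φ) atTop (𝓝 z)) : Tendsto u atTop (𝓝 z) := by
  have hL0 : L = 0 :=
    tendsto_nhds_unique (hL.comp hφ.tendsto_atTop) (tendsto_iff_dist_tendsto_zero.1 hz)
  exact tendsto_iff_dist_tendsto_zero.2 (hL0 ▸ hL)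

section Prox

variable {E : Type*} [NormedAddCommGroup E]

def IsProxPoint (f : E → EReal) (μ : ℝ) (y t : E) : Prop :=
  IsMinOn (fun x => f x + ((μ / 2 * ‖x - y‖ ^ 2 : ℝ) : EReal)) univ t

namespace IsProxPoint

variable {f : E → EReal} {μ : ℝ} {y t : E}

theorem exists_eq_coe (h : IsProxPoint f μ y t) {z : E} {m : ℝ} (hz : IsMinOn f univ z)
    (hzm : f z = m) : ∃ T : ℝ, f t = T := by
  have htop : f t ≠ ⊤ := by
    intro htop
    have := isMinOn_iff.1 h z (mem_univ _)
    rw [htop, EReal.top_add_coe, hzm, top_le_iff, ← EReal.coe_add] at this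
    exact EReal.coe_ne_top _ this
  have hbot : f t ≠ ⊥ :=
    ne_bot_of_le_ne_bot (hzm ▸ EReal.coe_ne_bot m) (isMinOn_iff.1 hz t (mem_univ _))
  exact ⟨(f t).toReal, (EReal.coe_toReal htop hbot).symm⟩

variable [InnerProductSpace ℝ E]

theorem add_inner_le (h : IsProxPoint f μ y t)
    (hconv : Convex ℝ {p : E × ℝ | f p.1 ≤ (p.2 : EReal)}) {x : E} {T X : ℝ}
    (ht : f t = T) (hx : f x = X) :
    T + μ * inner ℝ (y - t) (x - t) ≤ X := by
  -- `μ (y - t)` is a subgradient of `f` at `t`: compare `t` with `t + s (x - t)` and let `s → 0`.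
  refine le_of_forall_mem_Ioc_le_add_mul (d := μ / 2 * ‖x - t‖ ^ 2) fun s hs => ?_
  have hcomb : f (t + s • (x - t)) ≤ ((1 - s) * T + s * X : ℝ) := by
    have := hconv (show (t, T) ∈ _ from ht.le) (show (x, X) ∈ _ from hx.le)
      (sub_nonneg.2 hs.2) hs.1.le (by ring)
    rwa [show (1 - s) • (t, T) + s • (x, X) = (t + s • (x - t), (1 - s) * T + s * X) by
      ext <;> simp only [Prod.fst_add, Prod.snd_add, Prod.smul_fst, Prod.smul_snd, smul_eq_mul]
      module] at this
  have hstep : T + μ / 2 * ‖t - y‖ ^ 2 ≤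
      (1 - s) * T + s * X + μ / 2 * ‖s • (x - t) - (y - t)‖ ^ 2 := by
    have := (isMinOn_iff.1 h (t + s • (x - t)) (mem_univ _)).trans (add_le_add hcomb le_rfl)
    rw [ht, show t + s • (x - t) - y = s • (x - t) - (y - t) by abel] at this
    exact_mod_cast this
  rw [norm_sub_sq_real (s • (x - t)), norm_smul, real_inner_smul_left,
    Real.norm_of_nonneg hs.1.le, real_inner_comm, norm_sub_rev y t] at hstep
  have : s * (T + μ * inner ℝ (y - t) (x - t)) ≤ s * (X + s * (μ / 2 * ‖x - t‖ ^ 2)) := by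
    nlinarith
  exact le_of_mul_le_mul_left this hs.1

theorem sq_add_sq_le (h : IsProxPoint f μ y t)
    (hconv : Convex ℝ {p : E × ℝ | f p.1 ≤ (p.2 : EReal)}) (hμ : 0 < μ) {z : E} {m : ℝ}
    (hz : IsMinOn f univ z) (hzm : f z = m) :
    ‖t - z‖ ^ 2 + ‖t - y‖ ^ 2 ≤ ‖y - z‖ ^ 2 := by
  obtain ⟨T, ht⟩ := h.exists_eq_coe hz hzm
  have hmT : m ≤ T := by
    have := isMinOn_iff.1 hz t (mem_univ _)
    rwa [hzm, ht, EReal.coe_le_coe_iff] at this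
  have hinner : inner ℝ (y - t) (z - t) ≤ 0 :=
    nonpos_of_mul_nonpos_right (by linarith [h.add_inner_le hconv ht hzm]) hμ
  calc ‖t - z‖ ^ 2 + ‖t - y‖ ^ 2
      ≤ ‖y - t‖ ^ 2 - 2 * inner ℝ (y - t) (z - t) + ‖z - t‖ ^ 2 := by
        rw [norm_sub_rev t z, norm_sub_rev t y]; linarith
    _ = ‖y - z‖ ^ 2 := by rw [← norm_sub_sq_real, sub_sub_sub_cancel_right]

theorem le_add_mul_norm_mul_norm (h : IsProxPoint f μ y t)
    (hconv : Convex ℝ {p : E × ℝ | f p.1 ≤ (p.2 : EReal)}) (hμ : 0 ≤ μ) {x : E} {T X : ℝ}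
    (ht : f t = T) (hx : f x = X) :
    T ≤ X + μ * (‖y - t‖ * ‖x - t‖) := by
  have hcs := neg_le_of_abs_le (abs_real_inner_le_norm (y - t) (x - t))
  nlinarith [h.add_inner_le hconv ht hx]

theorem norm_sub_le (h : IsProxPoint f μ y t)
    (hconv : Convex ℝ {p : E × ℝ | f p.1 ≤ (p.2 : EReal)}) (hμ : 0 < μ) {z : E} {m : ℝ}
    (hz : IsMinOn f univ z) (hzm : f z = m) :
    ‖t - z‖ ≤ ‖y - z‖ :=
  (pow_le_pow_iff_left₀ (norm_nonneg _) (norm_nonneg _) two_ne_zero).1 <|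
    le_of_add_le_of_nonneg_left (h.sq_add_sq_le hconv hμ hz hzm) (sq_nonneg _)

end IsProxPoint

end Prox

namespace InexactProx

variable {E : Type*} [NormedAddCommGroup E] [InnerProductSpace ℝ E] {f : E → EReal}
  {μ ε : ℕ → ℝ} {y ty : ℕ → E} {z : E} {m : ℝ}

theorem exists_tendsto_norm_sub
    (hconv : Convex ℝ {p : E × ℝ | f p.1 ≤ (p.2 : EReal)}) (hμ : ∀ k, 0 < μ k)
    (hty : ∀ k, IsProxPoint f (μ k) (y k) (ty k)) (hy : ∀ k, ‖y (k + 1) - ty k‖ ≤ ε k)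
    (hε : Summable ε) (hz : IsMinOn f univ z) (hzm : f z = m) :
    ∃ L, Tendsto (fun k => ‖y k - z‖) atTop (𝓝 L) :=
  exists_tendsto_of_le_add_of_summable (fun _ => norm_nonneg _) hε fun k =>
    calc ‖y (k + 1) - z‖ ≤ ‖y (k + 1) - ty k‖ + ‖ty k - z‖ :=
          norm_sub_le_norm_sub_add_norm_sub _ _ _
      _ ≤ ‖y k - z‖ + ε k := by linarith [hy k, (hty k).norm_sub_le hconv (hμ k) hz hzm]

theorem tendsto_norm_prox_sub
    (hconv : Convex ℝ {p : E × ℝ | f p.1 ≤ (p.2 : EReal)}) (hμ : ∀ k, 0 < μ k)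
    (hty : ∀ k, IsProxPoint f (μ k) (y k) (ty k)) (hy : ∀ k, ‖y (k + 1) - ty k‖ ≤ ε k)
    (hε : Summable ε) (hz : IsMinOn f univ z) (hzm : f z = m) :
    Tendsto (fun k => ‖ty k - y k‖) atTop (𝓝 0) := by
  obtain ⟨L, hL⟩ := exists_tendsto_norm_sub hconv hμ hty hy hε hz hzm
  have hlower : Tendsto (fun k => ‖y (k + 1) - z‖ - ε k) atTop (𝓝 L) := by
    simpa using (hL.comp (tendsto_add_atTop_nat 1)).sub hε.tendsto_atTop_zero
  have hprox : Tendsto (fun k => ‖ty k - z‖) atTop (𝓝 L) :=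
    tendsto_of_tendsto_of_tendsto_of_le_of_le hlower hL
      (fun k => by linarith [hy k, norm_sub_le_norm_sub_add_norm_sub (y (k + 1)) (ty k) z])
      (fun k => (hty k).norm_sub_le hconv (hμ k) hz hzm)
  have hsq : Tendsto (fun k => ‖ty k - y k‖ ^ 2) atTop (𝓝 0) := by
    refine squeeze_zero (g := fun k => ‖y k - z‖ ^ 2 - ‖ty k - z‖ ^ 2) (fun k => sq_nonneg _)
      (fun k => ?_) ?_
    · linarith [(hty k).sq_add_sq_le hconv (hμ k) hz hzm]
    · simpa using (hL.pow 2).sub (hprox.pow 2)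
  simpa [Real.sqrt_sq (norm_nonneg _)] using hsq.sqrt

theorem tendsto_prox_value
    (hconv : Convex ℝ {p : E × ℝ | f p.1 ≤ (p.2 : EReal)}) (hμ : ∀ k, 0 < μ k) {M : ℝ}
    (hμM : ∀ᶠ k in atTop, μ k ≤ M)
    (hty : ∀ k, IsProxPoint f (μ k) (y k) (ty k)) (hy : ∀ k, ‖y (k + 1) - ty k‖ ≤ ε k)
    (hε : Summable ε) (hz : IsMinOn f univ z) (hzm : f z = m) :
    Tendsto (fun k => f (ty k)) atTop (𝓝 (m : EReal)) := by
  choose T hT using fun k => (hty k).exists_eq_coe hz hzm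
  obtain ⟨L, hL⟩ := exists_tendsto_norm_sub hconv hμ hty hy hε hz hzm
  have hstep : Tendsto (fun k => ‖y k - ty k‖) atTop (𝓝 0) := by
    simpa only [norm_sub_rev] using tendsto_norm_prox_sub hconv hμ hty hy hε hz hzm
  have hupper : Tendsto (fun k => m + M * (‖y k - ty k‖ * ‖y k - z‖)) atTop (𝓝 m) := by
    simpa using tendsto_const_nhds.add (tendsto_const_nhds.mul (hstep.mul hL))
  have hlim : Tendsto T atTop (𝓝 m) := by
    refine tendsto_of_tendsto_of_tendsto_of_le_of_le' tendsto_const_nhds hupper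
      (Eventually.of_forall fun k => ?_) ?_
    · have := isMinOn_iff.1 hz (ty k) (mem_univ _)
      rwa [hzm, hT, EReal.coe_le_coe_iff] at this
    · filter_upwards [hμM] with k hk
      calc T k ≤ m + μ k * (‖y k - ty k‖ * ‖z - ty k‖) :=
            (hty k).le_add_mul_norm_mul_norm hconv (hμ k).le (hT k) hzm
        _ ≤ m + M * (‖y k - ty k‖ * ‖y k - z‖) := by
          have := (hty k).norm_sub_le hconv (hμ k) hz hzm
          rw [norm_sub_rev] at this
          gcongr
          linarith [hμ k]
  simp only [hT]
  exact (continuous_coe_real_ereal.tendsto m).comp hlim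

theorem isMinOn_of_tendsto_comp
    (hconv : Convex ℝ {p : E × ℝ | f p.1 ≤ (p.2 : EReal)}) (hlsc : LowerSemicontinuous f)
    (hμ : ∀ k, 0 < μ k) {M : ℝ} (hμM : ∀ᶠ k in atTop, μ k ≤ M)
    (hty : ∀ k, IsProxPoint f (μ k) (y k) (ty k)) (hy : ∀ k, ‖y (k + 1) - ty k‖ ≤ ε k)
    (hε : Summable ε) (hz : IsMinOn f univ z) (hzm : f z = m)
    {φ : ℕ → ℕ} (hφ : StrictMono φ) {w : E} (hw : Tendsto (y ∘ φ) atTop (𝓝 w)) :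
    IsMinOn f univ w := by
  have hstep := tendsto_zero_iff_norm_tendsto_zero.2 <|
    tendsto_norm_prox_sub hconv hμ hty hy hε hz hzm
  have hprox : Tendsto (ty ∘ φ) atTop (𝓝 w) := by
    simpa [Function.comp_def] using hw.add (hstep.comp hφ.tendsto_atTop)
  have hfw : f w ≤ m :=
    calc f w ≤ liminf f (𝓝 w) := hlsc.le_liminf w
      _ ≤ liminf (f ∘ ty ∘ φ) atTop := hprox.liminf_le_liminf_comp
      _ = m :=
        ((tendsto_prox_value hconv hμ hμM hty hy hε hz hzm).comp hφ.tendsto_atTop).liminf_eq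
  exact isMinOn_univ_iff.2 fun x => hfw.trans (hzm ▸ isMinOn_iff.1 hz x (mem_univ _))

end InexactProx

/-- Rockafellar's convergence theorem for the inexact proximal point method:
if `f` is proper convex lsc with a minimizer, `0 < μ_k` with `limsup μ_k < ∞`,
`Σ ε_k < ∞`, `ỹ_{k+1} = argmin_x f(x) + (μ_k/2)‖x - y_k‖²`, and
`‖y_{k+1} - ỹ_{k+1}‖ ≤ ε_k`, then `(y_k)` converges to a minimizer of `f`. -/
theorem inexact_proximal_point_converges {n : ℕ} (f : EuclideanSpace ℝ (Fin n) → EReal)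
    (hconv : Convex ℝ {p : EuclideanSpace ℝ (Fin n) × ℝ | f p.1 ≤ (p.2 : EReal)})
    (hlsc : LowerSemicontinuous f)
    (hbot : ∀ x, f x ≠ ⊥)
    (xmin : EuclideanSpace ℝ (Fin n)) (hxmin : IsMinOn f Set.univ xmin)
    (hxmin_ne_top : f xmin ≠ ⊤)
    (μs : ℕ → ℝ) (hμpos : ∀ k, 0 < μs k)
    (hμbdd : Filter.limsup (fun k => ((μs k : ℝ) : EReal)) Filter.atTop < ⊤)
    (ε : ℕ → ℝ) (hε : Summable ε)
    (y ty : ℕ → EuclideanSpace ℝ (Fin n))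
    (hty : ∀ k, IsMinOn (fun x => f x + ((μs k / 2 * ‖x - y k‖ ^ 2 : ℝ) : EReal))
        Set.univ (ty k))
    (hyk : ∀ k, ‖y (k + 1) - ty k‖ ≤ ε k) :
    ∃ ystar, IsMinOn f Set.univ ystar ∧
      Filter.Tendsto y Filter.atTop (nhds ystar) := by
  obtain ⟨M, hM, -⟩ := EReal.exists_between_coe_real hμbdd
  have hμM : ∀ᶠ k in atTop, μs k ≤ M :=
    (eventually_lt_of_limsup_lt hM).mono fun k hk => by exact_mod_cast hk.le
  have hm : f xmin = (f xmin).toReal := (EReal.coe_toReal hxmin_ne_top (hbot xmin)).symm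
  obtain ⟨L, hL⟩ := InexactProx.exists_tendsto_norm_sub hconv hμpos hty hyk hε hxmin hm
  obtain ⟨C, hC⟩ := hL.bddAbove_range
  obtain ⟨w, -, φ, hφ, hw⟩ :=
    tendsto_subseq_of_bounded (Metric.isBounded_closedBall (x := xmin))
      fun k => mem_closedBall_iff_norm.2 (hC ⟨k, rfl⟩)
  have hwmin :=
    InexactProx.isMinOn_of_tendsto_comp hconv hlsc hμpos hμM hty hyk hε hxmin hm hφ hw
  have hwm : f w = (f xmin).toReal :=
    (le_antisymm (isMinOn_iff.1 hwmin xmin (mem_univ _))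
      (isMinOn_iff.1 hxmin w (mem_univ _))).trans hm
  obtain ⟨L', hL'⟩ := InexactProx.exists_tendsto_norm_sub hconv hμpos hty hyk hε hwmin hwm
  have hdist : Tendsto (fun k => dist (y k) w) atTop (𝓝 L') := by
    simpa only [dist_eq_norm] using hL'
  exact ⟨w, hwmin, tendsto_of_tendsto_dist_of_subseq hdist hφ hw⟩
end

section
/- (Primal recovery bound.) Let Φ be μ-strongly convex, proper, lsc on ℝ^n; Ψ proper convex lsc on ℝ^m; L: ℝ^n → ℝ^m linear. Consider the primal problem min_x Φ(x) + Ψ(Lx) with unique solution x⋆, and the dual objective q(z) = Φ*(L*z) + Ψ*(−z). Assume strong duality holds (zero duality gap). Then for any dual point z, the point x(z) = ∇Φ*(L*z) satisfies (μ/2)‖x(z) − x⋆‖² ≤ q(z) − min_z q(z). -/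
open scoped RealInnerProductSpace

/-- Fenchel conjugate of an extended-real-valued function on an inner product space. -/
noncomputable def fconj {E : Type*} [NormedAddCommGroup E] [InnerProductSpace ℝ E]
    (f : E → EReal) (y : E) : EReal := ⨆ x, ((⟪x, y⟫ : ℝ) : EReal) - f x

/-! Strong convexity sharpens the Fenchel–Young inequality for `Φ` at `L* z` by a quadratic
margin: since `x(z)` maximises `⟪·, L* z⟫ - Φ`, every `x` satisfies
`Φ x + Φ*(L* z) ≥ ⟪x, L* z⟫ + μ/2 ‖x - x(z)‖²`. Adding the plain Fenchel–Young inequality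
`Ψ (L x) + Ψ*(-z) ≥ -⟪L x, z⟫` at `x = x⋆` gives `Φ x⋆ + Ψ (L x⋆) + q z ≥ μ/2 ‖x⋆ - x(z)‖²`,
and by strong duality the primal value `Φ x⋆ + Ψ (L x⋆)` is `-min q`. -/

open Set Filter Topology

theorem StrongConvexOn.add_sq_le_of_isMinOn {E : Type*} [NormedAddCommGroup E] [NormedSpace ℝ E]
    {s : Set E} {m : ℝ} {f : E → ℝ} {x₀ x : E}
    (hf : StrongConvexOn s m f) (hmin : IsMinOn f s x₀) (hx₀ : x₀ ∈ s) (hx : x ∈ s) :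
    f x₀ + m / 2 * ‖x - x₀‖ ^ 2 ≤ f x := by
  have hsegment : ∀ t ∈ Ioc (0 : ℝ) 1, f x₀ + (1 - t) * (m / 2 * ‖x - x₀‖ ^ 2) ≤ f x := by
    rintro t ⟨ht₀, ht₁⟩
    have hconv := hf.2 hx hx₀ ht₀.le (sub_nonneg.2 ht₁) (add_sub_cancel t 1)
    have hle := hmin (hf.1 hx hx₀ ht₀.le (sub_nonneg.2 ht₁) (add_sub_cancel t 1))
    simp only [smul_eq_mul, mem_ofPred_eq] at hconv hle
    refine le_of_mul_le_mul_left ?_ ht₀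
    linear_combination hle + hconv
  have hlim : Tendsto (fun t : ℝ ↦ f x₀ + (1 - t) * (m / 2 * ‖x - x₀‖ ^ 2)) (𝓝[>] 0)
      (𝓝 (f x₀ + m / 2 * ‖x - x₀‖ ^ 2)) := by
    refine (Continuous.tendsto' (by fun_prop) 0 _ ?_).mono_left nhdsWithin_le_nhds
    simp
  exact le_of_tendsto hlim (eventually_of_mem (Ioc_mem_nhdsGT one_pos) hsegment)

section FenchelConjugate

variable {E : Type*} [NormedAddCommGroup E] [InnerProductSpace ℝ E]

theorem StrongConvexOn.sub_inner {s : Set E} {m : ℝ} {f : E → ℝ} (hf : StrongConvexOn s m f)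
    (a : E) : StrongConvexOn s m fun x ↦ f x - ⟪x, a⟫ := by
  rw [strongConvexOn_iff_convex] at hf ⊢
  refine (hf.sub (((innerₛₗ ℝ).flip a).concaveOn hf.1)).congr fun x _ ↦ ?_
  simp only [Pi.sub_apply, LinearMap.flip_apply, innerₛₗ_apply_apply]
  ring

theorem strongConvexOn_toReal_of_convex_epigraph {f : E → EReal} {μ : ℝ} (hbot : ∀ x, f x ≠ ⊥)
    (hsc : Convex ℝ {p : E × ℝ | f p.1 - ((μ / 2 * ‖p.1‖ ^ 2 : ℝ) : EReal) ≤ (p.2 : EReal)}) :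
    StrongConvexOn {x | f x ≠ ⊤} μ fun x ↦ (f x).toReal := by
  rw [strongConvexOn_iff_convex, convexOn_iff_convex_epigraph]
  convert hsc using 1
  ext ⟨x, t⟩
  by_cases hx : f x = ⊤
  · simp only [mem_ofPred_eq, hx, ne_eq, not_true_eq_false, false_and, EReal.top_sub_coe,
      top_le_iff, EReal.coe_ne_top]
  · obtain ⟨r, hr⟩ : ∃ r : ℝ, f x = r := ⟨(f x).toReal, (EReal.coe_toReal hx (hbot x)).symm⟩
    simp only [mem_ofPred_eq, hr, ne_eq, EReal.coe_ne_top, not_false_eq_true, true_and,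
      EReal.toReal_coe, ← EReal.coe_sub, EReal.coe_le_coe_iff]

theorem EReal.coe_sub_eq_neg_sub (r : ℝ) (x : EReal) : (r : EReal) - x = -(x - r) := by
  rw [EReal.neg_sub (.inr (EReal.coe_ne_bot r)) (.inr (EReal.coe_ne_top r)), add_comm,
    sub_eq_add_neg]

theorem fconj_eq_of_isMinOn {f : E → EReal} {y x₀ : E}
    (hmin : IsMinOn (fun x ↦ f x - ((⟪x, y⟫ : ℝ) : EReal)) univ x₀) :
    fconj f y = ((⟪x₀, y⟫ : ℝ) : EReal) - f x₀ := by
  refine le_antisymm (iSup_le fun x ↦ ?_) (le_iSup (fun x ↦ ((⟪x, y⟫ : ℝ) : EReal) - f x) x₀)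
  rw [EReal.coe_sub_eq_neg_sub, EReal.coe_sub_eq_neg_sub]
  exact EReal.neg_le_neg_iff.2 (hmin (mem_univ x))

theorem fconj_ne_bot {f : E → EReal} (htop : ∃ x, f x ≠ ⊤) (y : E) : fconj f y ≠ ⊥ := by
  obtain ⟨x, hx⟩ := htop
  refine ne_bot_of_le_ne_bot ?_ (le_iSup (fun x ↦ ((⟪x, y⟫ : ℝ) : EReal) - f x) x)
  rw [Ne, sub_eq_add_neg, EReal.add_eq_bot_iff, EReal.neg_eq_bot_iff]
  simpa using hx

theorem inner_le_add_fconj {f : E → EReal} {x : E} (hx : f x ≠ ⊥) {y : E}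
    (hy : fconj f y ≠ ⊥) : ((⟪x, y⟫ : ℝ) : EReal) ≤ f x + fconj f y := by
  rw [add_comm, ← EReal.sub_le_iff_le_add (.inl hx) (.inr hy)]
  exact le_iSup (fun x ↦ ((⟪x, y⟫ : ℝ) : EReal) - f x) x

theorem inner_add_sq_le_add_fconj {f : E → EReal} {μ : ℝ} (hbot : ∀ x, f x ≠ ⊥)
    (htop : ∃ x, f x ≠ ⊤)
    (hsc : Convex ℝ {p : E × ℝ | f p.1 - ((μ / 2 * ‖p.1‖ ^ 2 : ℝ) : EReal) ≤ (p.2 : EReal)})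
    {a x₀ : E} (hmin : IsMinOn (fun x ↦ f x - ((⟪x, a⟫ : ℝ) : EReal)) univ x₀) (x : E) :
    ((⟪x, a⟫ + μ / 2 * ‖x - x₀‖ ^ 2 : ℝ) : EReal) ≤ f x + fconj f a := by
  have hconj := fconj_eq_of_isMinOn hmin
  have hconj_ne_bot := fconj_ne_bot htop a
  have hfin : ∀ y, f y ≠ ⊤ → f y = ((f y).toReal : EReal) := fun y hy ↦
    (EReal.coe_toReal hy (hbot y)).symm
  have hx₀ : f x₀ ≠ ⊤ := fun h ↦ hconj_ne_bot (by rw [hconj, h, EReal.sub_top])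
  by_cases hx : f x = ⊤
  · rw [hx, EReal.top_add_of_ne_bot hconj_ne_bot]
    exact le_top
  have hgmin : IsMinOn (fun y ↦ (f y).toReal - ⟪y, a⟫) {y | f y ≠ ⊤} x₀ := fun y hy ↦ by
    have h := hmin (mem_univ y)
    simp only [mem_ofPred_eq] at h ⊢
    rwa [hfin y hy, hfin x₀ hx₀, ← EReal.coe_sub, ← EReal.coe_sub, EReal.coe_le_coe_iff] at h
  have hgrowth := ((strongConvexOn_toReal_of_convex_epigraph hbot hsc).sub_inner a).add_sq_le_of_isMinOn hgmin hx₀ hx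
  rw [hconj, hfin x hx, hfin x₀ hx₀, ← EReal.coe_sub, ← EReal.coe_add, EReal.coe_le_coe_iff]
  linarith

end FenchelConjugate

theorem primal_recovery_bound_general {n m : ℕ}
    (Φ : EuclideanSpace ℝ (Fin n) → EReal) (Ψ : EuclideanSpace ℝ (Fin m) → EReal)
    (hΦbot : ∀ x, Φ x ≠ ⊥) (hΦtop : ∃ x, Φ x ≠ ⊤)
    (μ : ℝ)
    (hΦsc : Convex ℝ {p : EuclideanSpace ℝ (Fin n) × ℝ |
        Φ p.1 - ((μ/2 * ‖p.1‖ ^ 2 : ℝ) : EReal) ≤ (p.2 : EReal)})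
    (hΨbot : ∀ x, Ψ x ≠ ⊥) (hΨtop : ∃ x, Ψ x ≠ ⊤)
    (L : EuclideanSpace ℝ (Fin n) →L[ℝ] EuclideanSpace ℝ (Fin m))
    (xstar : EuclideanSpace ℝ (Fin n))
    (hxs : IsMinOn (fun x => Φ x + Ψ (L x)) Set.univ xstar)
    (hdual : (⨅ x, Φ x + Ψ (L x))
        = - ⨅ z, (fconj Φ (ContinuousLinearMap.adjoint L z) + fconj Ψ (-z)))
    (z : EuclideanSpace ℝ (Fin m)) (xz : EuclideanSpace ℝ (Fin n))
    (hxz : IsMinOn (fun x => Φ x - ((⟪x, ContinuousLinearMap.adjoint L z⟫ : ℝ) : EReal))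
        Set.univ xz) :
    ((μ/2 * ‖xz - xstar‖ ^ 2 : ℝ) : EReal)
      ≤ (fconj Φ (ContinuousLinearMap.adjoint L z) + fconj Ψ (-z))
        - ⨅ w, (fconj Φ (ContinuousLinearMap.adjoint L w) + fconj Ψ (-w)) := by
  have hΦ := inner_add_sq_le_add_fconj hΦbot hΦtop hΦsc hxz xstar
  have hΨ := inner_le_add_fconj (hΨbot (L xstar)) (fconj_ne_bot hΨtop (-z))
  have hprimal : Φ xstar + Ψ (L xstar) = -⨅ w, (fconj Φ (L.adjoint w) + fconj Ψ (-w)) :=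
    (le_antisymm (le_iInf fun x ↦ hxs (mem_univ x)) (iInf_le _ xstar)).trans hdual
  calc ((μ/2 * ‖xz - xstar‖ ^ 2 : ℝ) : EReal)
      = ((⟪xstar, L.adjoint z⟫ + μ / 2 * ‖xstar - xz‖ ^ 2 : ℝ) : EReal)
        + ((⟪L xstar, -z⟫ : ℝ) : EReal) := by
        rw [← EReal.coe_add, inner_neg_right, ← ContinuousLinearMap.adjoint_inner_right,
          norm_sub_rev]
        ring_nf
    _ ≤ (Φ xstar + fconj Φ (L.adjoint z)) + (Ψ (L xstar) + fconj Ψ (-z)) := add_le_add hΦ hΨ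
    _ = (fconj Φ (L.adjoint z) + fconj Ψ (-z)) + (Φ xstar + Ψ (L xstar)) := by
        rw [add_add_add_comm, add_comm]
    _ = _ := by rw [hprimal, sub_eq_add_neg]

/-- Primal recovery bound: with `Φ` `μ`-strongly convex proper lsc, `Ψ` proper convex lsc,
primal problem `min_x Φ(x) + Ψ(Lx)` with unique solution `x⋆`, dual objective
`q(z) = Φ*(L*z) + Ψ*(-z)`, and zero duality gap, the point `x(z) = ∇Φ*(L*z)`
(the minimizer of `Φ(·) - ⟨·, L*z⟩`) satisfies
`(μ/2)‖x(z) - x⋆‖² ≤ q(z) - min q`. -/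
theorem primal_recovery_bound {n m : ℕ}
    (Φ : EuclideanSpace ℝ (Fin n) → EReal) (Ψ : EuclideanSpace ℝ (Fin m) → EReal)
    (hΦlsc : LowerSemicontinuous Φ) (hΦbot : ∀ x, Φ x ≠ ⊥) (hΦtop : ∃ x, Φ x ≠ ⊤)
    (μ : ℝ) (hμ : 0 < μ)
    (hΦsc : Convex ℝ {p : EuclideanSpace ℝ (Fin n) × ℝ |
        Φ p.1 - ((μ/2 * ‖p.1‖ ^ 2 : ℝ) : EReal) ≤ (p.2 : EReal)})
    (hΨconv : Convex ℝ {p : EuclideanSpace ℝ (Fin m) × ℝ | Ψ p.1 ≤ (p.2 : EReal)})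
    (hΨlsc : LowerSemicontinuous Ψ) (hΨbot : ∀ x, Ψ x ≠ ⊥) (hΨtop : ∃ x, Ψ x ≠ ⊤)
    (L : EuclideanSpace ℝ (Fin n) →L[ℝ] EuclideanSpace ℝ (Fin m))
    (xstar : EuclideanSpace ℝ (Fin n))
    (hxs : IsMinOn (fun x => Φ x + Ψ (L x)) Set.univ xstar)
    (huniq : ∀ x, IsMinOn (fun x' => Φ x' + Ψ (L x')) Set.univ x → x = xstar)
    (hdual : (⨅ x, Φ x + Ψ (L x))
        = - ⨅ z, (fconj Φ (ContinuousLinearMap.adjoint L z) + fconj Ψ (-z)))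
    (z : EuclideanSpace ℝ (Fin m)) (xz : EuclideanSpace ℝ (Fin n))
    (hxz : IsMinOn (fun x => Φ x - ((⟪x, ContinuousLinearMap.adjoint L z⟫ : ℝ) : EReal))
        Set.univ xz) :
    ((μ/2 * ‖xz - xstar‖ ^ 2 : ℝ) : EReal)
      ≤ (fconj Φ (ContinuousLinearMap.adjoint L z) + fconj Ψ (-z))
        - ⨅ w, (fconj Φ (ContinuousLinearMap.adjoint L w) + fconj Ψ (-w)) :=
  primal_recovery_bound_general Φ Ψ hΦbot hΦtop μ hΦsc hΨbot hΨtop L xstar hxs hdual z xz hxz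
end

section
/- (Projection onto the weighted ℓ¹ ball reduces to soft-thresholding with a scalar parameter.) Let α ∈ ℝ^d with α_i > 0, and C = {x ∈ ℝ^d : Σ α_i|x_i| ≤ 1}. For y ∉ C, the Euclidean projection of y onto C is given componentwise by x_i = sign(y_i)·max(|y_i| − θα_i, 0) for a unique θ > 0 chosen so that Σ α_i max(|y_i| − θα_i, 0) = 1. -/
/-!
The function `θ ↦ Σ αᵢ max(|yᵢ| - θαᵢ, 0)` is continuous and antitone, strictly decreasing
while positive, exceeds `1` at `θ = 0` because `y ∉ C`, and vanishes for large `θ`; so it takes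
the value `1` at exactly one `θ > 0`. For that `θ`, `yᵢ - xᵢ` is `θαᵢ` times a subgradient of
`|·|` at `xᵢ`; summing the subgradient inequalities gives `⟪z - x, x - y⟫ ≥ 0` for every
`z ∈ C`, and this variational inequality makes `x` the nearest point of `C` to `y`.
-/

theorem isMinOn_half_norm_sub_sq_of_inner_nonneg {F : Type*} [NormedAddCommGroup F]
    [InnerProductSpace ℝ F] {s : Set F} {x y : F} (h : ∀ z ∈ s, 0 ≤ inner ℝ (z - x) (x - y)) :
    IsMinOn (fun z => (1 : ℝ) / 2 * ‖z - y‖ ^ 2) s x := by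
  refine isMinOn_iff.2 fun z hz => ?_
  have hsplit := norm_add_sq_real (z - x) (x - y)
  rw [sub_add_sub_cancel] at hsplit
  nlinarith [h z hz, sq_nonneg ‖z - x‖]

noncomputable def softThreshold (t a : ℝ) : ℝ := Real.sign a * max (|a| - t) 0

theorem abs_softThreshold {t : ℝ} (ht : 0 ≤ t) (a : ℝ) :
    |softThreshold t a| = max (|a| - t) 0 := by
  rw [softThreshold, abs_mul, abs_of_nonneg (le_max_right (|a| - t) 0)]
  rcases eq_or_ne a 0 with rfl | ha
  · simp [ht]
  · rcases Real.sign_apply_eq_of_ne_zero a ha with hs | hs <;> simp [hs]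

/-- `a - softThreshold t a` is a subgradient of `t * |·|` at `softThreshold t a`. -/
theorem mul_abs_softThreshold_sub_le {t : ℝ} (ht : 0 ≤ t) (a z : ℝ) :
    t * |softThreshold t a| - t * |z| ≤ (softThreshold t a - a) * (z - softThreshold t a) := by
  have hz₁ := le_abs_self z
  have hz₂ := neg_abs_le z
  rw [abs_softThreshold ht]
  rcases le_or_gt |a| t with hsmall | hlarge
  · have hzero : softThreshold t a = 0 := by
      simp [softThreshold, max_eq_right (sub_nonpos.2 hsmall)]
    rw [hzero, max_eq_right (sub_nonpos.2 hsmall)]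
    nlinarith [abs_mul a z, le_abs_self (a * z)]
  · rw [softThreshold, max_eq_left (sub_nonneg.2 hlarge.le)]
    rcases lt_trichotomy a 0 with ha | rfl | ha
    · rw [Real.sign_of_neg ha, abs_of_neg ha]
      nlinarith
    · simp at hlarge; linarith
    · rw [Real.sign_of_pos ha, abs_of_pos ha]
      nlinarith

section WeightedShrinkage

variable {ι : Type*} [Fintype ι] (α y : ι → ℝ)

noncomputable def weightedShrinkage (θ : ℝ) : ℝ := ∑ i, α i * max (|y i| - θ * α i) 0

theorem weightedShrinkage_zero : weightedShrinkage α y 0 = ∑ i, α i * |y i| := by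
  simp [weightedShrinkage]

theorem continuous_weightedShrinkage : Continuous (weightedShrinkage α y) := by
  unfold weightedShrinkage
  fun_prop

variable {α}

theorem antitone_weightedShrinkage (hα : ∀ i, 0 ≤ α i) : Antitone (weightedShrinkage α y) :=
  fun θ₁ θ₂ h => Finset.sum_le_sum fun i _ =>
    mul_le_mul_of_nonneg_left (max_le_max (by nlinarith [hα i]) le_rfl) (hα i)

theorem weightedShrinkage_lt_of_lt (hα : ∀ i, 0 < α i) {θ₁ θ₂ : ℝ} (h : θ₁ < θ₂)
    (hpos : 0 < weightedShrinkage α y θ₂) :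
    weightedShrinkage α y θ₂ < weightedShrinkage α y θ₁ := by
  obtain ⟨i, -, hi⟩ : ∃ i ∈ Finset.univ, 0 < α i * max (|y i| - θ₂ * α i) 0 :=
    Finset.exists_lt_of_sum_lt (by simpa [weightedShrinkage] using hpos)
  have hact : 0 < |y i| - θ₂ * α i := by
    by_contra! h
    simp [max_eq_right h] at hi
  refine Finset.sum_lt_sum (fun j _ => ?_) ⟨i, Finset.mem_univ i, ?_⟩
  · exact mul_le_mul_of_nonneg_left (max_le_max (by nlinarith [hα j]) le_rfl) (hα j).le
  · refine mul_lt_mul_of_pos_left ?_ (hα i)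
    rw [max_eq_left hact.le, max_eq_left (by nlinarith [hα i])]
    nlinarith [hα i]

theorem weightedShrinkage_sum_abs_div_eq_zero (hα : ∀ i, 0 < α i) :
    weightedShrinkage α y (∑ i, |y i| / α i) = 0 := by
  refine Finset.sum_eq_zero fun i _ => ?_
  have hle : |y i| / α i ≤ ∑ j, |y j| / α j :=
    Finset.single_le_sum (fun j _ => div_nonneg (abs_nonneg (y j)) (hα j).le) (Finset.mem_univ i)
  rw [div_le_iff₀ (hα i)] at hle
  rw [max_eq_right (by linarith), mul_zero]

theorem existsUnique_pos_weightedShrinkage_eq (hα : ∀ i, 0 < α i) {c : ℝ} (hc : 0 < c)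
    (hc₀ : c < weightedShrinkage α y 0) : ∃! θ, 0 < θ ∧ weightedShrinkage α y θ = c := by
  obtain ⟨θ, -, hθ⟩ := intermediate_value_uIcc (continuous_weightedShrinkage α y).continuousOn
    (Set.mem_uIcc.2 (Or.inr ⟨(weightedShrinkage_sum_abs_div_eq_zero y hα).le.trans hc.le, hc₀.le⟩) :
      c ∈ Set.uIcc (weightedShrinkage α y 0) (weightedShrinkage α y (∑ i, |y i| / α i)))
  have hθpos : 0 < θ := by
    by_contra! h
    linarith [antitone_weightedShrinkage y (fun i => (hα i).le) h]
  refine ⟨θ, ⟨hθpos, hθ⟩, fun θ' ⟨_, hθ'⟩ => ?_⟩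
  by_contra hne
  rcases lt_or_gt_of_ne hne with h | h
  · linarith [weightedShrinkage_lt_of_lt y hα h (hθ ▸ hc)]
  · linarith [weightedShrinkage_lt_of_lt y hα h (hθ' ▸ hc)]

theorem sum_mul_abs_softThreshold {θ : ℝ} (hθ : 0 ≤ θ) (hα : ∀ i, 0 ≤ α i) :
    ∑ i, α i * |softThreshold (θ * α i) (y i)| = weightedShrinkage α y θ :=
  Finset.sum_congr rfl fun i _ => by rw [abs_softThreshold (mul_nonneg hθ (hα i))]

theorem inner_sub_softThreshold_nonneg {θ : ℝ} (hθ : 0 ≤ θ) (hα : ∀ i, 0 ≤ α i)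
    {x y z : EuclideanSpace ℝ ι} (hx : ∀ i, x i = softThreshold (θ * α i) (y i))
    (hz : ∑ i, α i * |z i| ≤ weightedShrinkage α y θ) :
    0 ≤ inner ℝ (z - x) (x - y) := by
  have hinner : inner ℝ (z - x) (x - y) = ∑ i, (x i - y i) * (z i - x i) := by
    simp [PiLp.inner_apply]
  have hterm : ∀ i, θ * (α i * |x i|) - θ * (α i * |z i|) ≤ (x i - y i) * (z i - x i) :=
    fun i => by
      rw [hx i, ← mul_assoc, ← mul_assoc]
      exact mul_abs_softThreshold_sub_le (mul_nonneg hθ (hα i)) (y i) (z i)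
  calc 0 ≤ θ * (weightedShrinkage α y θ - ∑ i, α i * |z i|) :=
        mul_nonneg hθ (sub_nonneg.2 hz)
    _ = ∑ i, (θ * (α i * |x i|) - θ * (α i * |z i|)) := by
        simp only [hx, sum_mul_abs_softThreshold y hθ hα, Finset.sum_sub_distrib,
          ← Finset.mul_sum, mul_sub]
    _ ≤ ∑ i, (x i - y i) * (z i - x i) := Finset.sum_le_sum fun i _ => hterm i
    _ = inner ℝ (z - x) (x - y) := hinner.symm

end WeightedShrinkage

/-- Projection onto the weighted ℓ¹ ball `C = {x : Σ αᵢ|xᵢ| ≤ 1}` (with `αᵢ > 0`) of a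
point `y ∉ C` is given componentwise by soft-thresholding
`xᵢ = sign(yᵢ)·max(|yᵢ| - θαᵢ, 0)` for the unique `θ > 0` with
`Σ αᵢ max(|yᵢ| - θαᵢ, 0) = 1`. -/
theorem proj_weighted_l1_ball {d : ℕ} (α : Fin d → ℝ) (hα : ∀ i, 0 < α i)
    (y : EuclideanSpace ℝ (Fin d))
    (hy : ¬ (∑ i, α i * |y i| ≤ 1)) :
    (∃! θ : ℝ, 0 < θ ∧ ∑ i, α i * max (|y i| - θ * α i) 0 = 1)
    ∧ ∀ θ : ℝ, 0 < θ → (∑ i, α i * max (|y i| - θ * α i) 0 = 1) →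
        ((WithLp.equiv 2 (Fin d → ℝ)).symm
            (fun i => Real.sign (y i) * max (|y i| - θ * α i) 0)
          ∈ {x : EuclideanSpace ℝ (Fin d) | ∑ i, α i * |x i| ≤ 1})
        ∧ IsMinOn (fun x : EuclideanSpace ℝ (Fin d) => (1 : ℝ)/2 * ‖x - y‖ ^ 2)
            {x : EuclideanSpace ℝ (Fin d) | ∑ i, α i * |x i| ≤ 1}
            ((WithLp.equiv 2 (Fin d → ℝ)).symm
              (fun i => Real.sign (y i) * max (|y i| - θ * α i) 0)) := by
  have hα₀ : ∀ i, 0 ≤ α i := fun i => (hα i).le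
  have hy₀ : 1 < weightedShrinkage α y 0 := by
    rw [weightedShrinkage_zero]
    exact not_le.1 hy
  refine ⟨existsUnique_pos_weightedShrinkage_eq y hα one_pos hy₀, fun θ hθ hsum => ?_⟩
  set x : EuclideanSpace ℝ (Fin d) :=
    (WithLp.equiv 2 (Fin d → ℝ)).symm fun i => softThreshold (θ * α i) (y i)
  have hx : ∀ i, x i = softThreshold (θ * α i) (y i) := fun i => rfl
  have hθ_root : weightedShrinkage α y θ = 1 := hsum
  refine ⟨?_, isMinOn_half_norm_sub_sq_of_inner_nonneg fun z hz =>
    inner_sub_softThreshold_nonneg hθ.le hα₀ hx (hθ_root ▸ hz)⟩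
  show ∑ i, α i * |x i| ≤ 1
  simp only [hx, sum_mul_abs_softThreshold y hθ.le hα₀, hθ_root, le_refl]
end
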